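/- Let d_e > 0 and d_i ≥ 0 be real numbers. There exists a real number λ > 0 such that for all smooth vector fields V, A* : T³ → ℝ³, setting B* = ∇×A* and P* = V + λ A*, one has 2λ ∫_{T³} B*·(V − (d_i/d_e²) A*) dx + (1/d_e²) ∫_{T³} [ B*·A* + d_e² V·(∇×V) ] dx = ∫_{T³} P*·(∇×P*) dx. -/

import Mathlib

open MeasureTheory Real
open scoped ContDiff

noncomputable section

abbrev V3 : Type := Fin 3 → ℝ

def dot (a b : V3) : ℝ := ∑ i, a i * b i

def cross (a b : V3) : V3 :=
  ![a 1 * b 2 - a 2 * b 1, a 2 * b 0 - a 0 * b 2, a 0 * b 1 - a 1 * b 0]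

/-- Partial derivative `∂ᵢ f` of a scalar field. -/
def pd (i : Fin 3) (f : V3 → ℝ) (x : V3) : ℝ := fderiv ℝ f x (Pi.single i 1)

/-- Gradient of a scalar field. -/
def grad (f : V3 → ℝ) (x : V3) : V3 := fun i => pd i f x

/-- Divergence of a vector field. -/
def vdiv (u : V3 → V3) (x : V3) : ℝ := ∑ i, pd i (fun y => u y i) x

/-- Curl of a vector field. -/
def curl (u : V3 → V3) (x : V3) : V3 :=
  ![pd 1 (fun y => u y 2) x - pd 2 (fun y => u y 1) x,
    pd 2 (fun y => u y 0) x - pd 0 (fun y => u y 2) x,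
    pd 0 (fun y => u y 1) x - pd 1 (fun y => u y 0) x]

/-- Directional derivative `(a·∇)u` of a vector field `u` along the vector `a`. -/
def dirDeriv (a : V3) (u : V3 → V3) (x : V3) : V3 :=
  fun i => ∑ j, a j * pd j (fun y => u y i) x

/-- The fundamental cell of the flat torus `T³ = ℝ³/(2πℤ)³`. -/
def T3 : Set V3 := Set.Icc 0 (fun _ => 2 * π)

/-- Periodicity with period `2π` in each coordinate direction. -/
def Periodic3 {α : Type*} (f : V3 → α) : Prop :=
  ∀ (x : V3) (i : Fin 3), f (x + Pi.single i (2 * π)) = f x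


lemma one_le_inf : (∞ : WithTop ℕ∞) ≠ 0 := by simp

lemma integrableOn_T3 {f : V3 → ℝ} (hf : Continuous f) : IntegrableOn f T3 :=
  hf.continuousOn.integrableOn_compact (by unfold T3; exact isCompact_Icc)

lemma pd_continuous {f : V3 → ℝ} (hf : ContDiff ℝ ∞ f) (i : Fin 3) :
    Continuous (pd i f) :=
  (hf.continuous_fderiv one_le_inf).clm_apply continuous_const

lemma insertNth_shift (i : Fin 3) (y : Fin 2 → ℝ) :
    (Fin.insertNth i (0:ℝ) y : V3) + Pi.single i (2 * π) = Fin.insertNth i (2 * π) y := by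
  funext j
  rcases eq_or_ne j i with rfl | hne
  · simp
  · obtain ⟨k, rfl⟩ := Fin.exists_succAbove_eq hne
    simp [Pi.single_eq_of_ne (Fin.succAbove_ne i k)]

lemma integral_pd_zero {g : V3 → ℝ} (hg : ContDiff ℝ ∞ g) (hpg : Periodic3 g) (i : Fin 3) :
    ∫ x in T3, pd i g x = 0 := by
  classical
  set a : V3 := 0 with ha
  set b : V3 := (fun _ => 2 * π) with hb
  have hle : a ≤ b := fun j => by positivity
  set f : V3 → V3 := fun x j => if j = i then g x else 0 with hf
  set f' : V3 → V3 →L[ℝ] V3 :=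
    fun x => ContinuousLinearMap.pi (fun j => if j = i then fderiv ℝ g x else 0) with hf'
  have hdiv : ∀ x, (∑ j, f' x (Pi.single j 1) j) = pd i g x := by
    intro x
    rw [Finset.sum_eq_single i]
    · simp [f', pd]
    · intro j _ hj; simp [f', hj]
    · simp
  have Hc : ContinuousOn f (Set.Icc a b) := by
    apply Continuous.continuousOn
    apply continuous_pi
    intro j
    rcases eq_or_ne j i with rfl | h
    · simpa [f] using hg.continuous
    · simp only [f, h, if_false]
      exact continuous_const
  have Hd : ∀ x ∈ (Set.pi Set.univ fun j => Set.Ioo (a j) (b j)) \ (∅ : Set V3),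
      HasFDerivAt f (f' x) x := by
    intro x _
    rw [hf']
    apply hasFDerivAt_pi.mpr
    intro j
    rcases eq_or_ne j i with rfl | h
    · simpa [f] using ((hg.differentiable one_le_inf) x).hasFDerivAt
    · simpa [f, h] using hasFDerivAt_const (0:ℝ) x
  have Hi : IntegrableOn (fun x => ∑ j, f' x (Pi.single j 1) j) (Set.Icc a b) := by
    have : (fun x => ∑ j, f' x (Pi.single j 1) j) = pd i g := funext hdiv
    rw [this]
    exact integrableOn_T3 (pd_continuous hg i)
  have key := MeasureTheory.integral_divergence_of_hasFDerivAt_off_countable a b hle f f'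
      ∅ Set.countable_empty Hc Hd Hi
  have hfaces : ∀ j : Fin 3,
      ((∫ x in Set.Icc (a ∘ Fin.succAbove j) (b ∘ Fin.succAbove j),
          f (Fin.insertNth j (b j) x) j) -
        ∫ x in Set.Icc (a ∘ Fin.succAbove j) (b ∘ Fin.succAbove j),
          f (Fin.insertNth j (a j) x) j) = 0 := by
    intro j
    rcases eq_or_ne j i with rfl | h
    · have : ∀ y : Fin 2 → ℝ, f (Fin.insertNth j (b j) y) j = f (Fin.insertNth j (a j) y) j := by
        intro y
        have := hpg (Fin.insertNth j (0:ℝ) y) j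
        rw [insertNth_shift j y] at this
        simp [f, ha, hb, this]
      simp [this]
    · simp [f, h]
  have h2 : ∫ x in T3, pd i g x
      = ∫ x in Set.Icc a b, ∑ j : Fin 3, f' x (Pi.single j 1) j :=
    integral_congr_ae (Filter.Eventually.of_forall fun x => (hdiv x).symm)
  rw [h2, key]
  exact Finset.sum_eq_zero fun j _ => hfaces j

lemma comp_contDiff {u : V3 → V3} (hu : ContDiff ℝ ∞ u) (i : Fin 3) :
    ContDiff ℝ ∞ fun y => u y i := (contDiff_pi.mp hu) i

lemma Periodic3.comp {u : V3 → V3} (hu : Periodic3 u) (i : Fin 3) :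
    Periodic3 fun y => u y i := fun x j => congrFun (hu x j) i

lemma Periodic3.mulc {f g : V3 → ℝ} (hf : Periodic3 f) (hg : Periodic3 g) :
    Periodic3 fun y => f y * g y := fun x j => by
  simp only [hf x j, hg x j]

lemma pd_mul {f g : V3 → ℝ} (hf : ContDiff ℝ ∞ f) (hg : ContDiff ℝ ∞ g) (i : Fin 3) (x : V3) :
    pd i (fun y => f y * g y) x = f x * pd i g x + g x * pd i f x := by
  unfold pd
  rw [fderiv_fun_mul ((hf.differentiable one_le_inf) x) ((hg.differentiable one_le_inf) x)]
  simp [smul_eq_mul]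

lemma cont_curl {u : V3 → V3} (hu : ContDiff ℝ ∞ u) (i : Fin 3) :
    Continuous fun x => curl u x i := by
  fin_cases i <;>
    simp only [curl, Matrix.cons_val_zero, Matrix.cons_val_one, Matrix.head_cons,
      Matrix.cons_val_two, Matrix.tail_cons, Fin.isValue] <;>
    exact (pd_continuous (comp_contDiff hu _) _).sub (pd_continuous (comp_contDiff hu _) _)

lemma cont_dot {p q : V3 → V3} (hp : ∀ i, Continuous fun x => p x i)
    (hq : ∀ i, Continuous fun x => q x i) : Continuous fun x => dot (p x) (q x) := by
  unfold dot
  exact continuous_finset_sum _ fun i _ => (hp i).mul (hq i)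

lemma integral_dot_curl_symm {u w : V3 → V3} (hu : ContDiff ℝ ∞ u) (hpu : Periodic3 u)
    (hw : ContDiff ℝ ∞ w) (hpw : Periodic3 w) :
    ∫ x in T3, dot (u x) (curl w x) = ∫ x in T3, dot (w x) (curl u x) := by
  classical
  -- the six exact-derivative terms
  set p1 : V3 → ℝ := pd 1 (fun y => u y 0 * w y 2) with hp1
  set p2 : V3 → ℝ := pd 2 (fun y => u y 0 * w y 1) with hp2
  set p3 : V3 → ℝ := pd 2 (fun y => u y 1 * w y 0) with hp3
  set p4 : V3 → ℝ := pd 0 (fun y => u y 1 * w y 2) with hp4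
  set p5 : V3 → ℝ := pd 0 (fun y => u y 2 * w y 1) with hp5
  set p6 : V3 → ℝ := pd 1 (fun y => u y 2 * w y 0) with hp6
  have hsm : ∀ i j : Fin 3, ContDiff ℝ ∞ fun y => u y i * w y j := fun i j =>
    (comp_contDiff hu i).mul (comp_contDiff hw j)
  have hper : ∀ i j : Fin 3, Periodic3 fun y => u y i * w y j := fun i j =>
    (hpu.comp i).mulc (hpw.comp j)
  have key : ∀ x, dot (u x) (curl w x) - dot (w x) (curl u x)
      = p1 x - p2 x + p3 x - p4 x + p5 x - p6 x := by
    intro x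
    rw [hp1, hp2, hp3, hp4, hp5, hp6]
    rw [pd_mul (comp_contDiff hu 0) (comp_contDiff hw 2),
        pd_mul (comp_contDiff hu 0) (comp_contDiff hw 1),
        pd_mul (comp_contDiff hu 1) (comp_contDiff hw 0),
        pd_mul (comp_contDiff hu 1) (comp_contDiff hw 2),
        pd_mul (comp_contDiff hu 2) (comp_contDiff hw 1),
        pd_mul (comp_contDiff hu 2) (comp_contDiff hw 0)]
    simp only [dot, curl, Fin.sum_univ_three, Matrix.cons_val_zero, Matrix.cons_val_one,
      Matrix.head_cons, Matrix.cons_val_two, Matrix.tail_cons]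
    ring
  have ip : ∀ (i j k : Fin 3), IntegrableOn (pd k fun y => u y i * w y j) T3 :=
    fun i j k => integrableOn_T3 (pd_continuous (hsm i j) k)
  have i1 : IntegrableOn p1 T3 := ip 0 2 1
  have i2 : IntegrableOn p2 T3 := ip 0 1 2
  have i3 : IntegrableOn p3 T3 := ip 1 0 2
  have i4 : IntegrableOn p4 T3 := ip 1 2 0
  have i5 : IntegrableOn p5 T3 := ip 2 1 0
  have i6 : IntegrableOn p6 T3 := ip 2 0 1
  have iL : IntegrableOn (fun x => dot (u x) (curl w x)) T3 :=
    integrableOn_T3 (cont_dot (fun i => (comp_contDiff hu i).continuous) (cont_curl hw))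
  have iR : IntegrableOn (fun x => dot (w x) (curl u x)) T3 :=
    integrableOn_T3 (cont_dot (fun i => (comp_contDiff hw i).continuous) (cont_curl hu))
  have j2 : IntegrableOn (fun x => p1 x - p2 x) T3 := i1.sub i2
  have j3 : IntegrableOn (fun x => p1 x - p2 x + p3 x) T3 := j2.add i3
  have j4 : IntegrableOn (fun x => p1 x - p2 x + p3 x - p4 x) T3 := j3.sub i4
  have j5 : IntegrableOn (fun x => p1 x - p2 x + p3 x - p4 x + p5 x) T3 := j4.add i5
  have hz : ∫ x in T3, (p1 x - p2 x + p3 x - p4 x + p5 x - p6 x) = 0 := by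
    rw [integral_sub j5 i6, integral_add j4 i5, integral_sub j3 i4,
        integral_add j2 i3, integral_sub i1 i2]
    rw [hp1, hp2, hp3, hp4, hp5, hp6,
        integral_pd_zero (hsm 0 2) (hper 0 2), integral_pd_zero (hsm 0 1) (hper 0 1),
        integral_pd_zero (hsm 1 0) (hper 1 0), integral_pd_zero (hsm 1 2) (hper 1 2),
        integral_pd_zero (hsm 2 1) (hper 2 1), integral_pd_zero (hsm 2 0) (hper 2 0)]
    ring
  have hsub : (∫ x in T3, dot (u x) (curl w x)) - ∫ x in T3, dot (w x) (curl u x)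
      = ∫ x in T3, (dot (u x) (curl w x) - dot (w x) (curl u x)) := (integral_sub iL iR).symm
  rw [integral_congr_ae (Filter.Eventually.of_forall key), hz] at hsub
  linarith

lemma dot_comm (a b : V3) : dot a b = dot b a :=
  Finset.sum_congr rfl fun i _ => mul_comm _ _

lemma pd_add_smul {f g : V3 → ℝ} (hf : ContDiff ℝ ∞ f) (hg : ContDiff ℝ ∞ g) (c : ℝ)
    (i : Fin 3) (x : V3) :
    pd i (fun y => f y + c * g y) x = pd i f x + c * pd i g x := by
  unfold pd
  rw [fderiv_fun_add ((hf.differentiable one_le_inf) x)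
      (((hg.differentiable one_le_inf) x).const_mul c),
    fderiv_const_mul ((hg.differentiable one_le_inf) x) c]
  simp [smul_eq_mul]

theorem extended_mhd_canonical_helicity
    (de di : ℝ) (hde : 0 < de) (hdi : 0 ≤ di) :
    ∃ lam : ℝ, 0 < lam ∧
      ∀ (V As : V3 → V3),
        ContDiff ℝ ∞ V → Periodic3 V → ContDiff ℝ ∞ As → Periodic3 As →
        2 * lam * (∫ x in T3, dot (curl As x) (V x - (di / de ^ 2) • As x))
          + (1 / de ^ 2) *
              (∫ x in T3, (dot (curl As x) (As x) + de ^ 2 * dot (V x) (curl V x)))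
          = ∫ x in T3,
              dot (V x + lam • As x) (curl (fun y => V y + lam • As y) x) := by
  have hde2 : (0:ℝ) < de ^ 2 := by positivity
  set lam : ℝ := (Real.sqrt (di ^ 2 + de ^ 2) - di) / de ^ 2 with hlamdef
  have hs : Real.sqrt (di ^ 2 + de ^ 2) ^ 2 = di ^ 2 + de ^ 2 :=
    Real.sq_sqrt (by positivity)
  have hlt : di < Real.sqrt (di ^ 2 + de ^ 2) := by
    have h2 : di ^ 2 < di ^ 2 + de ^ 2 := by nlinarith
    nlinarith [hs, Real.sqrt_nonneg (di ^ 2 + de ^ 2)]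
  have hlam : 0 < lam := div_pos (by linarith) hde2
  have hk : de ^ 2 * lam ^ 2 + 2 * di * lam = 1 := by
    rw [hlamdef]
    field_simp
    nlinarith [hs]
  have hco : 1 / de ^ 2 - 2 * lam * (di / de ^ 2) = lam ^ 2 := by
    field_simp
    nlinarith [hk]
  have hinv : de ^ 2 * (1 / de ^ 2) = 1 := by field_simp
  refine ⟨lam, hlam, ?_⟩
  intro V A hV hpV hA hpA
  have iVV : IntegrableOn (fun x => dot (V x) (curl V x)) T3 :=
    integrableOn_T3 (cont_dot (fun i => (comp_contDiff hV i).continuous) (cont_curl hV))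
  have iVA : IntegrableOn (fun x => dot (V x) (curl A x)) T3 :=
    integrableOn_T3 (cont_dot (fun i => (comp_contDiff hV i).continuous) (cont_curl hA))
  have iAV : IntegrableOn (fun x => dot (A x) (curl V x)) T3 :=
    integrableOn_T3 (cont_dot (fun i => (comp_contDiff hA i).continuous) (cont_curl hV))
  have iAA : IntegrableOn (fun x => dot (A x) (curl A x)) T3 :=
    integrableOn_T3 (cont_dot (fun i => (comp_contDiff hA i).continuous) (cont_curl hA))
  set E3 := ∫ x in T3, dot (V x) (curl V x) with hE3
  set E4 := ∫ x in T3, dot (V x) (curl A x) with hE4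
  set E5 := ∫ x in T3, dot (A x) (curl V x) with hE5
  set E6 := ∫ x in T3, dot (A x) (curl A x) with hE6
  have H1 : (∫ x in T3, dot (curl A x) (V x - (di / de ^ 2) • A x))
      = E4 - (di / de ^ 2) * E6 := by
    have l1 : ∀ x : V3, dot (curl A x) (V x - (di / de ^ 2) • A x)
        = dot (V x) (curl A x) - (di / de ^ 2) * dot (A x) (curl A x) := by
      intro x
      simp only [dot, Fin.sum_univ_three, Pi.sub_apply, Pi.smul_apply, smul_eq_mul]
      ring
    rw [integral_congr_ae (Filter.Eventually.of_forall l1),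
      integral_sub iVA (iAA.const_mul _), integral_const_mul]
  have H2 : (∫ x in T3, (dot (curl A x) (A x) + de ^ 2 * dot (V x) (curl V x)))
      = E6 + de ^ 2 * E3 := by
    have l2 : ∀ x : V3, dot (curl A x) (A x) + de ^ 2 * dot (V x) (curl V x)
        = dot (A x) (curl A x) + de ^ 2 * dot (V x) (curl V x) := by
      intro x; rw [dot_comm]
    rw [integral_congr_ae (Filter.Eventually.of_forall l2),
      integral_add iAA (iVV.const_mul _), integral_const_mul]
  have H3 : (∫ x in T3, dot (V x + lam • A x) (curl (fun y => V y + lam • A y) x))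
      = E3 + lam * E4 + (lam * E5 + lam ^ 2 * E6) := by
    have l3 : ∀ x : V3, dot (V x + lam • A x) (curl (fun y => V y + lam • A y) x)
        = dot (V x) (curl V x) + lam * dot (V x) (curl A x)
          + (lam * dot (A x) (curl V x) + lam ^ 2 * dot (A x) (curl A x)) := by
      intro x
      simp only [dot, curl, Fin.sum_univ_three, Matrix.cons_val_zero, Matrix.cons_val_one,
        Matrix.head_cons, Matrix.cons_val_two, Matrix.tail_cons, Pi.add_apply, Pi.smul_apply,
        smul_eq_mul]
      rw [pd_add_smul (comp_contDiff hV 2) (comp_contDiff hA 2) lam 1 x,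
          pd_add_smul (comp_contDiff hV 1) (comp_contDiff hA 1) lam 2 x,
          pd_add_smul (comp_contDiff hV 0) (comp_contDiff hA 0) lam 2 x,
          pd_add_smul (comp_contDiff hV 2) (comp_contDiff hA 2) lam 0 x,
          pd_add_smul (comp_contDiff hV 1) (comp_contDiff hA 1) lam 0 x,
          pd_add_smul (comp_contDiff hV 0) (comp_contDiff hA 0) lam 1 x]
      ring
    have k1 : IntegrableOn (fun x => dot (V x) (curl V x) + lam * dot (V x) (curl A x)) T3 :=
      iVV.add (iVA.const_mul _)
    have k2 : IntegrableOn
        (fun x => lam * dot (A x) (curl V x) + lam ^ 2 * dot (A x) (curl A x)) T3 :=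
      (iAV.const_mul _).add (iAA.const_mul _)
    rw [integral_congr_ae (Filter.Eventually.of_forall l3),
      integral_add k1 k2,
      integral_add iVV (iVA.const_mul lam),
      integral_add (iAV.const_mul lam) (iAA.const_mul (lam ^ 2)),
      integral_const_mul, integral_const_mul, integral_const_mul]
  have hsymm : E5 = E4 := by
    rw [hE5, hE4]; exact integral_dot_curl_symm hA hpA hV hpV
  rw [H1, H2, H3, hsymm]
  linear_combination E6 * hco + E3 * hinv


end
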